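/- For the Dyck code D over {a,b,ā,b̄} (least solution of D = aD*ā ∪ bD*b̄), no proper nonempty suffix of an element of D is a prefix of an element of D*. -/

import Mathlib

inductive D4 : Type | a | b | abar | bbar
deriving DecidableEq

open D4

/-- `C*`: `w` is a concatenation of words of `C`. -/
def InStar (C : Set (List D4)) (w : List D4) : Prop :=
  ∃ l : List (List D4), (∀ u ∈ l, u ∈ C) ∧ l.flatten = w

/-- The Dyck code `D` over `{a, b, ā, b̄}`: the least language with
`D = a D* ā ∪ b D* b̄`. -/
inductive Dyck : List D4 → Prop
  | mk_a (l : List (List D4)) (h : ∀ w ∈ l, Dyck w) :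
      Dyck (a :: (l.flatten ++ [abar]))
  | mk_b (l : List (List D4)) (h : ∀ w ∈ l, Dyck w) :
      Dyck (b :: (l.flatten ++ [bbar]))

/-- The Dyck code as a set of words. -/
def D : Set (List D4) := {w | Dyck w}

/-! The height of a word counts `a, b` as `+1` and `ā, b̄` as `-1`. A word of `D` has height `0`
and every proper nonempty prefix of it has positive height, while every prefix of a word of `D*`
has nonnegative height. So if `w = p s` with `w ∈ D`, then `s` has negative height and cannot
be a prefix of a word of `D*`. -/

def weight : D4 → ℤ
  | a => 1
  | b => 1
  | abar => -1
  | bbar => -1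

def height (w : List D4) : ℤ := (w.map weight).sum

@[simp] lemma height_nil : height [] = 0 := rfl

@[simp] lemma height_cons (x : D4) (w : List D4) : height (x :: w) = weight x + height w := by
  simp [height]

@[simp] lemma height_append (u v : List D4) : height (u ++ v) = height u + height v := by
  simp [height]

def IsBalanced (w : List D4) : Prop :=
  height w = 0 ∧ ∀ q, q <+: w → 0 ≤ height q

lemma isBalanced_nil : IsBalanced [] :=
  ⟨rfl, fun q hq => by simp [List.prefix_nil.mp hq]⟩

lemma IsBalanced.append {u v : List D4} (hu : IsBalanced u) (hv : IsBalanced v) :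
    IsBalanced (u ++ v) := by
  refine ⟨by simp [hu.1, hv.1], fun q hq => ?_⟩
  rcases List.prefix_or_prefix_of_prefix hq (List.prefix_append u v) with hqu | ⟨r, rfl⟩
  · exact hu.2 q hqu
  · rw [List.prefix_append_right_inj] at hq
    simpa [hu.1] using hv.2 r hq

lemma IsBalanced.flatten {l : List (List D4)} (hl : ∀ u ∈ l, IsBalanced u) :
    IsBalanced l.flatten := by
  induction l with
  | nil => exact isBalanced_nil
  | cons u l ih =>
    exact (hl u (by simp)).append (ih fun v hv => hl v (by simp [hv]))

lemma List.exists_eq_cons_isPrefix_of_isPrefix_cons_concat {α : Type*} {x y : α}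
    {v q : List α} (hq : q <+: x :: (v ++ [y])) (hq₀ : q ≠ []) (hqw : q ≠ x :: (v ++ [y])) :
    ∃ r, q = x :: r ∧ r <+: v := by
  obtain ⟨r, rfl, hr⟩ := (List.prefix_cons_iff.mp hq).resolve_left hq₀
  refine ⟨r, rfl, (List.prefix_concat_iff.mp hr).resolve_left ?_⟩
  rintro rfl
  exact hqw rfl

section Wrap

variable {x y : D4} {v : List D4}

lemma height_pos_of_isPrefix_wrap (hv : IsBalanced v) (hx : weight x = 1) {q : List D4}
    (hq : q <+: x :: (v ++ [y])) (hq₀ : q ≠ []) (hqw : q ≠ x :: (v ++ [y])) :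
    0 < height q := by
  obtain ⟨r, rfl, hr⟩ := List.exists_eq_cons_isPrefix_of_isPrefix_cons_concat hq hq₀ hqw
  have := hv.2 r hr
  simp only [height_cons, hx]
  omega

lemma IsBalanced.wrap (hv : IsBalanced v) (hx : weight x = 1) (hy : weight y = -1) :
    IsBalanced (x :: (v ++ [y])) := by
  refine ⟨by simp [hv.1, hx, hy], fun q hq => ?_⟩
  by_cases hq₀ : q = []
  · simp [hq₀]
  by_cases hqw : q = x :: (v ++ [y])
  · simp [hqw, hv.1, hx, hy]
  exact (height_pos_of_isPrefix_wrap hv hx hq hq₀ hqw).le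

end Wrap

lemma Dyck.isBalanced {w : List D4} (hw : Dyck w) : IsBalanced w := by
  induction hw with
  | mk_a l _ ih => exact (IsBalanced.flatten ih).wrap rfl rfl
  | mk_b l _ ih => exact (IsBalanced.flatten ih).wrap rfl rfl

lemma Dyck.height_pos_of_isPrefix {w q : List D4} (hw : Dyck w) (hq : q <+: w) (hq₀ : q ≠ [])
    (hqw : q ≠ w) : 0 < height q := by
  cases hw with
  | mk_a l h =>
    exact height_pos_of_isPrefix_wrap (.flatten fun u hu => (h u hu).isBalanced) rfl hq hq₀ hqw
  | mk_b l h =>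
    exact height_pos_of_isPrefix_wrap (.flatten fun u hu => (h u hu).isBalanced) rfl hq hq₀ hqw

lemma isBalanced_of_inStar {z : List D4} (hz : InStar D z) : IsBalanced z := by
  obtain ⟨l, hl, rfl⟩ := hz
  exact .flatten fun u hu => Dyck.isBalanced (hl u hu)

/-- no proper nonempty suffix of an element of the Dyck code `D`
is a prefix of an element of `D*`. -/
theorem stmt16 :
    ∀ w ∈ D, ∀ p s : List D4, w = p ++ s → p ≠ [] → s ≠ [] →
      ¬ ∃ z : List D4, InStar D z ∧ s <+: z := by
  rintro w hw p s rfl hp hs ⟨z, hz, hsz⟩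
  have hp_pos : 0 < height p :=
    Dyck.height_pos_of_isPrefix hw (List.prefix_append p s) hp (by simpa using hs)
  have hs_nonneg : 0 ≤ height s := (isBalanced_of_inStar hz).2 s hsz
  have hw_zero : height (p ++ s) = 0 := (Dyck.isBalanced hw).1
  simp only [height_append] at hw_zero
  omega
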